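/- arXiv:2001.02188 — 3 statements merged into one kernel-verified Lean document; each statement's English description precedes it below -/
import Mathlib

section
/- Let m ≥ 1, let N_Σ be a centered Gaussian vector in ℝ^m with covariance matrix Σ, and let F be an ℝ^m-valued random vector with E‖F‖ < ∞, independent of N_Σ. Let h : ℝ^m → ℝ be of class C² with bounded first and second order partial derivatives. Then E[h(N_Σ)] − E[h(F)] = (1/2)·∫_0^1 { t^{−1/2}·Σ_{i=1}^m E[∂_i h(√t·N_Σ + √(1−t)·F)·N_i] − (1−t)^{−1/2}·Σ_{i=1}^m E[∂_i h(√t·N_Σ + √(1−t)·F)·F_i] } dt, where N_i and F_i denote the coordinates of N_Σ and F. -/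
/-!
Along the path `X_t = √t • N + √(1 - t) • F`, the function `φ t = E h(X_t)` runs from `E h(F)`
to `E h(N)`. Since `Dh` is bounded, differentiation under the integral gives
`φ' t = E[Dh(X_t) (N / (2√t) - F / (2√(1 - t)))]` on `(0, 1)`; the two terms are continuous in
`t` times `t^(-1/2)` and `(1 - t)^(-1/2)`, hence integrable on `[0, 1]`, and the fundamental
theorem of calculus gives the identity.
-/

open MeasureTheory ProbabilityTheory Filter
open scoped ENNReal NNReal BigOperators

noncomputable section

abbrev Euc (m : ℕ) := EuclideanSpace ℝ (Fin m)

/-- `ν` is the law of a centered Gaussian random vector in `ℝ^m` with covariance matrix `S`. -/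
def IsCenteredGaussianCov {m : ℕ} (ν : Measure (Euc m)) (S : Matrix (Fin m) (Fin m) ℝ) : Prop :=
  IsProbabilityMeasure ν ∧
    ∀ t : Fin m → ℝ,
      ν.map (fun y => ∑ i, t i * y i) =
        gaussianReal 0 (∑ i, ∑ j, t i * S i j * t j).toNNReal

/-- Partial derivative `∂_i f` of a function `f : ℝ^m → ℝ`. -/
def pd {m : ℕ} (i : Fin m) (f : Euc m → ℝ) (x : Euc m) : ℝ :=
  fderiv ℝ f x (EuclideanSpace.single i 1)

open Set

section Interpolation

variable {Ω E : Type*} [NormedAddCommGroup E] [NormedSpace ℝ E] {X Y : Ω → E}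

def sqrtInterpolation (X Y : Ω → E) (t : ℝ) (ω : Ω) : E :=
  Real.sqrt t • X ω + Real.sqrt (1 - t) • Y ω

lemma sqrtInterpolation_one (X Y : Ω → E) : sqrtInterpolation X Y 1 = X := by
  ext ω; simp [sqrtInterpolation]

lemma sqrtInterpolation_zero (X Y : Ω → E) : sqrtInterpolation X Y 0 = Y := by
  ext ω; simp [sqrtInterpolation]

lemma norm_sqrtInterpolation_le {t : ℝ} (ht : t ∈ Icc 0 1) (ω : Ω) :
    ‖sqrtInterpolation X Y t ω‖ ≤ ‖X ω‖ + ‖Y ω‖ := by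
  have h₁ : Real.sqrt t ≤ 1 := Real.sqrt_le_one.mpr ht.2
  have h₂ : Real.sqrt (1 - t) ≤ 1 := Real.sqrt_le_one.mpr (by linarith [ht.1])
  calc ‖sqrtInterpolation X Y t ω‖
      ≤ Real.sqrt t * ‖X ω‖ + Real.sqrt (1 - t) * ‖Y ω‖ := by
        refine (norm_add_le _ _).trans_eq ?_
        rw [norm_smul, norm_smul, Real.norm_of_nonneg (Real.sqrt_nonneg _),
          Real.norm_of_nonneg (Real.sqrt_nonneg _)]
    _ ≤ ‖X ω‖ + ‖Y ω‖ := by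
        gcongr <;> exact mul_le_of_le_one_left (norm_nonneg _) ‹_›

lemma continuous_sqrtInterpolation (ω : Ω) :
    Continuous fun t => sqrtInterpolation X Y t ω := by
  unfold sqrtInterpolation; fun_prop

lemma hasDerivAt_sqrtInterpolation {t : ℝ} (ht₀ : 0 < t) (ht₁ : t < 1) (ω : Ω) :
    HasDerivAt (fun s => sqrtInterpolation X Y s ω)
      ((2 * Real.sqrt t)⁻¹ • X ω - (2 * Real.sqrt (1 - t))⁻¹ • Y ω) t := by
  have hX := (Real.hasDerivAt_sqrt ht₀.ne').smul_const (X ω)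
  have hY := ((Real.hasDerivAt_sqrt (sub_pos.2 ht₁).ne').comp t
    ((hasDerivAt_id t).const_sub 1)).smul_const (Y ω)
  convert hX.add hY using 1
  · ext s; simp [sqrtInterpolation]
  · simp [sub_eq_add_neg]

lemma norm_deriv_sqrtInterpolation_le {δ s : ℝ} (hδ : 0 < δ) (hs : s ∈ Ioo δ (1 - δ)) (ω : Ω) :
    ‖(2 * Real.sqrt s)⁻¹ • X ω - (2 * Real.sqrt (1 - s))⁻¹ • Y ω‖
      ≤ (2 * Real.sqrt δ)⁻¹ * (‖X ω‖ + ‖Y ω‖) := by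
  have hs₀ : δ ≤ s := hs.1.le
  have hs₁ : δ ≤ 1 - s := by linarith [hs.2]
  refine (norm_sub_le _ _).trans ?_
  rw [norm_smul, norm_smul, Real.norm_of_nonneg (by positivity),
    Real.norm_of_nonneg (by positivity), mul_add]
  gcongr

lemma integrable_sqrtInterpolation [MeasurableSpace Ω] {P : Measure Ω} (hX : Integrable X P)
    (hY : Integrable Y P) (t : ℝ) :
    Integrable (sqrtInterpolation X Y t) P :=
  (hX.smul (Real.sqrt t)).add (hY.smul (Real.sqrt (1 - t)))

end Interpolation

lemma intervalIntegrable_inv_sqrt : IntervalIntegrable (fun t => (Real.sqrt t)⁻¹) volume 0 1 :=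
  (intervalIntegral.intervalIntegrable_rpow' (r := -(1 / 2)) (by norm_num)).congr fun t ht => by
    rw [uIoc_of_le zero_le_one] at ht
    simp only [Real.rpow_neg ht.1.le, Real.sqrt_eq_rpow]

lemma intervalIntegrable_inv_sqrt_one_sub :
    IntervalIntegrable (fun t => (Real.sqrt (1 - t))⁻¹) volume 0 1 := by
  simpa using (intervalIntegrable_inv_sqrt.comp_sub_left 1).symm

section BoundedDerivative

variable {E : Type*} [NormedAddCommGroup E] [NormedSpace ℝ E] {h : E → ℝ} {K : ℝ}

lemma abs_le_abs_zero_add_of_norm_fderiv_le (hh : Differentiable ℝ h)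
    (hK : ∀ x, ‖fderiv ℝ h x‖ ≤ K) (x : E) : |h x| ≤ |h 0| + K * ‖x‖ := by
  have := Convex.norm_image_sub_le_of_norm_fderiv_le (fun y _ => hh y) (fun y _ => hK y)
    convex_univ (mem_univ 0) (mem_univ x)
  rw [sub_zero, Real.norm_eq_abs] at this
  linarith [abs_sub_abs_le_abs_sub (h x) (h 0)]

variable {Ω : Type*} [MeasurableSpace Ω] {P : Measure Ω} {W Z : Ω → E}

lemma integrable_comp_of_norm_fderiv_le [IsFiniteMeasure P] (hh : Differentiable ℝ h)
    (hK : ∀ x, ‖fderiv ℝ h x‖ ≤ K) (hZ : Integrable Z P) : Integrable (fun ω => h (Z ω)) P :=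
  ((integrable_const |h 0|).add (hZ.norm.const_mul K)).mono'
    (hh.continuous.comp_aestronglyMeasurable hZ.1)
    (ae_of_all _ fun ω => abs_le_abs_zero_add_of_norm_fderiv_le hh hK (Z ω))

lemma aestronglyMeasurable_fderiv_apply (hh : ContDiff ℝ 1 h) (hW : AEStronglyMeasurable W P)
    (hZ : AEStronglyMeasurable Z P) : AEStronglyMeasurable (fun ω => fderiv ℝ h (W ω) (Z ω)) P :=
  (((hh.continuous_fderiv one_ne_zero).comp continuous_fst).clm_apply continuous_snd)
    |>.comp_aestronglyMeasurable (hW.prodMk hZ)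

lemma integrable_fderiv_apply (hh : ContDiff ℝ 1 h) (hK : ∀ x, ‖fderiv ℝ h x‖ ≤ K)
    (hW : AEStronglyMeasurable W P) (hZ : Integrable Z P) :
    Integrable (fun ω => fderiv ℝ h (W ω) (Z ω)) P :=
  (hZ.norm.const_mul K).mono' (aestronglyMeasurable_fderiv_apply hh hW hZ.1)
    (ae_of_all _ fun ω => (fderiv ℝ h (W ω)).le_of_opNorm_le (hK _) _)

end BoundedDerivative

section SmartPath

variable {Ω E : Type*} [MeasurableSpace Ω] {P : Measure Ω}
  [NormedAddCommGroup E] [NormedSpace ℝ E] {h : E → ℝ} {K : ℝ} {X Y Z : Ω → E}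

lemma continuousOn_integral_comp_sqrtInterpolation [IsFiniteMeasure P] (hh : Differentiable ℝ h)
    (hK : ∀ x, ‖fderiv ℝ h x‖ ≤ K) (hX : Integrable X P) (hY : Integrable Y P) :
    ContinuousOn (fun t => ∫ ω, h (sqrtInterpolation X Y t ω) ∂P) (Icc 0 1) := by
  have hK₀ : 0 ≤ K := (norm_nonneg _).trans (hK 0)
  have hbound : ∀ t ∈ Icc (0 : ℝ) 1, ∀ ω,
      ‖h (sqrtInterpolation X Y t ω)‖ ≤ |h 0| + K * (‖X ω‖ + ‖Y ω‖) := fun t ht ω =>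
    calc ‖h (sqrtInterpolation X Y t ω)‖ ≤ |h 0| + K * ‖sqrtInterpolation X Y t ω‖ :=
          abs_le_abs_zero_add_of_norm_fderiv_le hh hK _
      _ ≤ |h 0| + K * (‖X ω‖ + ‖Y ω‖) := by gcongr; exact norm_sqrtInterpolation_le ht ω
  exact continuousOn_of_dominated
    (fun t _ => hh.continuous.comp_aestronglyMeasurable (integrable_sqrtInterpolation hX hY t).1)
    (fun t ht => ae_of_all _ (hbound t ht))
    ((integrable_const _).add ((hX.norm.add hY.norm).const_mul K))
    (ae_of_all _ fun ω => (hh.continuous.comp (continuous_sqrtInterpolation ω)).continuousOn)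

lemma continuous_integral_fderiv_sqrtInterpolation_apply (hh : ContDiff ℝ 1 h)
    (hK : ∀ x, ‖fderiv ℝ h x‖ ≤ K) (hX : Integrable X P) (hY : Integrable Y P)
    (hZ : Integrable Z P) :
    Continuous fun t => ∫ ω, fderiv ℝ h (sqrtInterpolation X Y t ω) (Z ω) ∂P :=
  continuous_of_dominated
    (fun t => aestronglyMeasurable_fderiv_apply hh (integrable_sqrtInterpolation hX hY t).1 hZ.1)
    (fun _ => ae_of_all _ fun _ => (fderiv ℝ h _).le_of_opNorm_le (hK _) _)
    (hZ.norm.const_mul K)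
    (ae_of_all _ fun ω => ((hh.continuous_fderiv one_ne_zero).comp
      (continuous_sqrtInterpolation ω)).clm_apply continuous_const)

lemma hasDerivAt_integral_comp_sqrtInterpolation [IsFiniteMeasure P] (hh : ContDiff ℝ 1 h)
    (hK : ∀ x, ‖fderiv ℝ h x‖ ≤ K) (hX : Integrable X P) (hY : Integrable Y P) {t : ℝ}
    (ht₀ : 0 < t) (ht₁ : t < 1) :
    HasDerivAt (fun s => ∫ ω, h (sqrtInterpolation X Y s ω) ∂P)
      ((1 / 2) * ((Real.sqrt t)⁻¹ * ∫ ω, fderiv ℝ h (sqrtInterpolation X Y t ω) (X ω) ∂P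
        - (Real.sqrt (1 - t))⁻¹ * ∫ ω, fderiv ℝ h (sqrtInterpolation X Y t ω) (Y ω) ∂P)) t := by
  have hK₀ : 0 ≤ K := (norm_nonneg _).trans (hK 0)
  have hdiff : Differentiable ℝ h := hh.differentiable one_ne_zero
  obtain ⟨δ, hδ, hδt, htδ⟩ : ∃ δ : ℝ, 0 < δ ∧ δ < t ∧ t < 1 - δ :=
    ⟨min t (1 - t) / 2, by positivity, by linarith [min_le_left t (1 - t)],
      by linarith [min_le_right t (1 - t)]⟩
  have hW := fun s => (integrable_sqrtInterpolation (P := P) hX hY s).1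
  obtain ⟨-, hderiv⟩ := hasDerivAt_integral_of_dominated_loc_of_deriv_le
    (bound := fun ω => K * ((2 * Real.sqrt δ)⁻¹ * (‖X ω‖ + ‖Y ω‖)))
    (Ioo_mem_nhds hδt htδ)
    (Eventually.of_forall fun s => hdiff.continuous.comp_aestronglyMeasurable (hW s))
    (integrable_comp_of_norm_fderiv_le hdiff hK (integrable_sqrtInterpolation hX hY t))
    (aestronglyMeasurable_fderiv_apply hh (hW t) ((hX.smul _).sub (hY.smul _)).1)
    (ae_of_all _ fun ω s hs => ((fderiv ℝ h _).le_of_opNorm_le (hK _) _).trans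
      (by gcongr; exact norm_deriv_sqrtInterpolation_le hδ hs ω))
    (((hX.norm.add hY.norm).const_mul _).const_mul K)
    (ae_of_all _ fun ω s hs => (hdiff _).hasFDerivAt.comp_hasDerivAt s
      (hasDerivAt_sqrtInterpolation (hδ.trans hs.1) (by linarith [hs.2]) ω))
  refine hderiv.congr_deriv ?_
  simp only [map_sub, map_smul, smul_eq_mul]
  rw [integral_sub, integral_const_mul, integral_const_mul, mul_inv, mul_inv]
  · ring
  all_goals exact (integrable_fderiv_apply hh hK (hW t) ‹_›).const_mul _

theorem integral_comp_sub_integral_comp_eq_integral_sqrtInterpolation [IsFiniteMeasure P]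
    (hh : ContDiff ℝ 1 h) (hK : ∀ x, ‖fderiv ℝ h x‖ ≤ K) (hX : Integrable X P)
    (hY : Integrable Y P) :
    ∫ ω, h (X ω) ∂P - ∫ ω, h (Y ω) ∂P =
      (1 / 2) * ∫ t in (0 : ℝ)..1,
        ((Real.sqrt t)⁻¹ * ∫ ω, fderiv ℝ h (sqrtInterpolation X Y t ω) (X ω) ∂P
          - (Real.sqrt (1 - t))⁻¹ * ∫ ω, fderiv ℝ h (sqrtInterpolation X Y t ω) (Y ω) ∂P) := by
  have hint := (intervalIntegrable_inv_sqrt.mul_continuousOn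
      (continuous_integral_fderiv_sqrtInterpolation_apply hh hK hX hY hX).continuousOn).sub
    (intervalIntegrable_inv_sqrt_one_sub.mul_continuousOn
      (continuous_integral_fderiv_sqrtInterpolation_apply hh hK hX hY hY).continuousOn)
  rw [← intervalIntegral.integral_const_mul,
    intervalIntegral.integral_eq_sub_of_hasDerivAt_of_le zero_le_one
      (continuousOn_integral_comp_sqrtInterpolation (hh.differentiable one_ne_zero) hK hX hY)
      (fun t ht => hasDerivAt_integral_comp_sqrtInterpolation hh hK hX hY ht.1 ht.2)
      (hint.const_mul _),
    sqrtInterpolation_one, sqrtInterpolation_zero]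

end SmartPath

section Coordinates

variable {m : ℕ}

lemma fderiv_apply_eq_sum_pd (h : Euc m → ℝ) (x v : Euc m) :
    fderiv ℝ h x v = ∑ i, pd i h x * v i := by
  conv_lhs => rw [← (EuclideanSpace.basisFun (Fin m) ℝ).sum_repr v]
  simp [pd, mul_comm]

lemma norm_fderiv_le_sum_abs_pd (h : Euc m → ℝ) (x : Euc m) :
    ‖fderiv ℝ h x‖ ≤ ∑ i, |pd i h x| :=
  ContinuousLinearMap.opNorm_le_bound _ (by positivity) fun v => by
    rw [fderiv_apply_eq_sum_pd, Finset.sum_mul]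
    refine (norm_sum_le _ _).trans (Finset.sum_le_sum fun i _ => ?_)
    rw [norm_mul, Real.norm_eq_abs]
    gcongr
    exact PiLp.norm_apply_le v i

lemma integral_fderiv_apply_eq_sum_integral_pd {Ω : Type*} [MeasurableSpace Ω] {P : Measure Ω}
    {h : Euc m → ℝ} {C : ℝ} (hh : ContDiff ℝ 1 h) (hC : ∀ x i, |pd i h x| ≤ C)
    {W Z : Ω → Euc m} (hW : AEStronglyMeasurable W P) (hZ : Integrable Z P) :
    ∫ ω, fderiv ℝ h (W ω) (Z ω) ∂P = ∑ i, ∫ ω, pd i h (W ω) * Z ω i ∂P := by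
  simp_rw [fderiv_apply_eq_sum_pd]
  exact integral_finsetSum _ fun i _ => (hZ.eval_piLp i).bdd_mul (c := C)
    (((hh.continuous_fderiv one_ne_zero).clm_apply continuous_const).comp_aestronglyMeasurable hW)
    (ae_of_all _ fun ω => (Real.norm_eq_abs _).trans_le (hC _ i))

lemma IsCenteredGaussianCov.integrable_id {ν : Measure (Euc m)} {S : Matrix (Fin m) (Fin m) ℝ}
    (hν : IsCenteredGaussianCov ν S) : Integrable id ν := by
  refine Integrable.of_eval_piLp fun i => ?_
  have hcoord : (fun y : Euc m => ∑ j, (Pi.single i 1 : Fin m → ℝ) j * y j) = fun y => y i := by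
    ext y; simp [Pi.single_apply]
  have hmap := hν.2 (Pi.single i 1)
  rw [hcoord] at hmap
  have hmeas : Measurable fun y : Euc m => y i := by fun_prop
  refine (integrable_map_measure aestronglyMeasurable_id hmeas.aemeasurable).1 ?_
  rw [hmap]
  exact memLp_one_iff_integrable.1 (memLp_id_gaussianReal 1)

end Coordinates

theorem interpolation_identity_general {m : ℕ}
    {Ω : Type*} [MeasurableSpace Ω] (P : Measure Ω) [IsProbabilityMeasure P]
    (S : Matrix (Fin m) (Fin m) ℝ)
    (N F : Ω → Euc m) (hN : Measurable N) (hF : Measurable F)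
    (hGauss : IsCenteredGaussianCov (P.map N) S)
    (hint : Integrable (fun ω => ‖F ω‖) P)
    (h : Euc m → ℝ) (hC2 : ContDiff ℝ 2 h)
    (hbd : ∃ C, ∀ x : Euc m, (∀ i, |pd i h x| ≤ C) ∧ ∀ i j, |pd i (pd j h) x| ≤ C) :
    (∫ ω, h (N ω) ∂P) - ∫ ω, h (F ω) ∂P =
      (1/2) * ∫ t in (0:ℝ)..1,
        ((Real.sqrt t)⁻¹ *
            ∑ i, ∫ ω, pd i h (Real.sqrt t • N ω + Real.sqrt (1-t) • F ω) * N ω i ∂P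
          - (Real.sqrt (1-t))⁻¹ *
            ∑ i, ∫ ω, pd i h (Real.sqrt t • N ω + Real.sqrt (1-t) • F ω) * F ω i ∂P) := by
  obtain ⟨C, hC⟩ := hbd
  have hpd : ∀ x i, |pd i h x| ≤ C := fun x i => (hC x).1 i
  have hh : ContDiff ℝ 1 h := hC2.of_le (by norm_num)
  have hK : ∀ x, ‖fderiv ℝ h x‖ ≤ m * C := fun x =>
    (norm_fderiv_le_sum_abs_pd h x).trans <| by
      simpa using Finset.sum_le_sum (s := Finset.univ) fun i _ => hpd x i
  have hNint : Integrable N P :=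
    (integrable_map_measure aestronglyMeasurable_id hN.aemeasurable).1 hGauss.integrable_id
  have hFint : Integrable F P := (integrable_norm_iff hF.aestronglyMeasurable).1 hint
  rw [integral_comp_sub_integral_comp_eq_integral_sqrtInterpolation hh hK hNint hFint]
  congr 2 with t
  have hW := (integrable_sqrtInterpolation hNint hFint t).1
  rw [integral_fderiv_apply_eq_sum_integral_pd hh hpd hW hNint,
    integral_fderiv_apply_eq_sum_integral_pd hh hpd hW hFint]
  rfl

/-- interpolation identity:
`E h(N_Σ) − E h(F)` equals `(1/2)∫₀¹ {t^{-1/2} Σ_i E[∂_i h(√t N + √(1−t) F) N_i]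
− (1−t)^{-1/2} Σ_i E[∂_i h(√t N + √(1−t) F) F_i]} dt`. -/
theorem interpolation_identity {m : ℕ} (hm : 1 ≤ m)
    {Ω : Type*} [MeasurableSpace Ω] (P : Measure Ω) [IsProbabilityMeasure P]
    (S : Matrix (Fin m) (Fin m) ℝ)
    (N F : Ω → Euc m) (hN : Measurable N) (hF : Measurable F)
    (hGauss : IsCenteredGaussianCov (P.map N) S)
    (hindep : IndepFun F N P)
    (hint : Integrable (fun ω => ‖F ω‖) P)
    (h : Euc m → ℝ) (hC2 : ContDiff ℝ 2 h)
    (hbd : ∃ C, ∀ x : Euc m, (∀ i, |pd i h x| ≤ C) ∧ ∀ i j, |pd i (pd j h) x| ≤ C) :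
    (∫ ω, h (N ω) ∂P) - ∫ ω, h (F ω) ∂P =
      (1/2) * ∫ t in (0:ℝ)..1,
        ((Real.sqrt t)⁻¹ *
            ∑ i, ∫ ω, pd i h (Real.sqrt t • N ω + Real.sqrt (1-t) • F ω) * N ω i ∂P
          - (Real.sqrt (1-t))⁻¹ *
            ∑ i, ∫ ω, pd i h (Real.sqrt t • N ω + Real.sqrt (1-t) • F ω) * F ω i ∂P) :=
  interpolation_identity_general P S N F hN hF hGauss hint h hC2 hbd
end
end

section
/- Let ρ : ℤ → ℝ, let n ≥ 1 be an integer and let b ∈ [1,2]. Then Σ_{i,j,k,ℓ=0}^{n−1} ρ(j−k)²·|ρ(i−j)·ρ(k−ℓ)| ≤ n·(2n)^{(2b−2)/b}·(Σ_{|k|<n} ρ(k)²)·(Σ_{|k|<n} |ρ(k)|^b)^{2/b}. -/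
/-!
Bounding the innermost sum over `l` by `S₁ = Σ_{|m|<n} |ρ(m)|`, then the sum over `k` by
`S₂ = Σ_{|m|<n} ρ(m)²` and the sum over `i` by `S₁` again leaves the free index `j`, so the
quadruple sum is at most `n S₂ S₁²`. The power-mean (Hölder) inequality
`S₁^b ≤ (2n-1)^{b-1} Σ_{|m|<n} |ρ(m)|^b`, raised to the power `2/b`, finishes the proof.
-/

open Finset

section WindowSums

variable {M : Type*} [AddCommMonoid M] [PartialOrder M] [IsOrderedAddMonoid M]

theorem Finset.sum_comp_le_sum_of_injOn {ι κ : Type*} [DecidableEq κ] {s : Finset ι}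
    {t : Finset κ} {φ : ι → κ} {f : κ → M} (hφ : Set.InjOn φ s) (hst : Set.MapsTo φ s t)
    (hf : ∀ k ∈ t, 0 ≤ f k) : ∑ i ∈ s, f (φ i) ≤ ∑ k ∈ t, f k := by
  rw [← sum_image hφ]
  exact sum_le_sum_of_subset_of_nonneg (image_subset_iff.2 hst) fun k hk _ => hf k hk

variable {f : ℤ → M} {n j : ℕ}

theorem sum_range_natCast_sub_le_sum_Ioo (hf : 0 ≤ f) (hj : j < n) :
    ∑ i ∈ range n, f (i - j) ≤ ∑ m ∈ Ioo (-(n : ℤ)) n, f m :=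
  sum_comp_le_sum_of_injOn (fun _ _ _ _ h => by simpa using h)
    (fun i hi => by simp only [coe_range, Set.mem_Iio, coe_Ioo, Set.mem_Ioo] at hi ⊢; omega)
    fun m _ => hf m

theorem sum_range_sub_natCast_le_sum_Ioo (hf : 0 ≤ f) (hj : j < n) :
    ∑ i ∈ range n, f (j - i) ≤ ∑ m ∈ Ioo (-(n : ℤ)) n, f m :=
  sum_comp_le_sum_of_injOn (fun _ _ _ _ h => by simpa using h)
    (fun i hi => by simp only [coe_range, Set.mem_Iio, coe_Ioo, Set.mem_Ioo] at hi ⊢; omega)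
    fun m _ => hf m

end WindowSums

theorem sum_range_chain_le_mul_sum_Ioo {R : Type*} [CommSemiring R] [PartialOrder R]
    [IsOrderedRing R] {f g h : ℤ → R} (hf : 0 ≤ f) (hg : 0 ≤ g) (hh : 0 ≤ h) (n : ℕ) :
    ∑ i ∈ range n, ∑ j ∈ range n, ∑ k ∈ range n, ∑ l ∈ range n,
        g (j - k) * (f (i - j) * h (k - l)) ≤
      n * ((∑ m ∈ Ioo (-(n : ℤ)) n, g m) *
        ((∑ m ∈ Ioo (-(n : ℤ)) n, f m) * ∑ m ∈ Ioo (-(n : ℤ)) n, h m)) := by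
  set F := ∑ m ∈ Ioo (-(n : ℤ)) n, f m
  set G := ∑ m ∈ Ioo (-(n : ℤ)) n, g m
  set H := ∑ m ∈ Ioo (-(n : ℤ)) n, h m
  have hF : 0 ≤ F := sum_nonneg fun m _ => hf m
  have hGH (j : ℕ) (hj : j < n) :
      ∑ k ∈ range n, g (j - k) * ∑ l ∈ range n, h (k - l) ≤ G * H :=
    calc ∑ k ∈ range n, g (j - k) * ∑ l ∈ range n, h (k - l)
        ≤ ∑ k ∈ range n, g (j - k) * H := by
          gcongr with k hk
          · exact hg _
          · exact sum_range_sub_natCast_le_sum_Ioo hh (mem_range.1 hk)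
      _ = (∑ k ∈ range n, g (j - k)) * H := (sum_mul ..).symm
      _ ≤ G * H := by
          gcongr
          · exact sum_nonneg fun m _ => hh m
          · exact sum_range_sub_natCast_le_sum_Ioo hg hj
  calc _ = ∑ j ∈ range n, (∑ i ∈ range n, f (i - j)) *
          ∑ k ∈ range n, g (j - k) * ∑ l ∈ range n, h (k - l) := by
        rw [sum_comm]
        refine sum_congr rfl fun j _ => ?_
        rw [sum_mul]
        refine sum_congr rfl fun i _ => ?_
        rw [mul_sum]
        refine sum_congr rfl fun k _ => ?_
        rw [mul_sum, mul_sum]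
        exact sum_congr rfl fun l _ => by ring
    _ ≤ ∑ j ∈ range n, F * (G * H) := by
        gcongr with j hj
        · exact sum_nonneg fun k _ => mul_nonneg (hg _) (sum_nonneg fun l _ => hh _)
        · exact sum_range_natCast_sub_le_sum_Ioo hf (mem_range.1 hj)
        · exact hGH j (mem_range.1 hj)
    _ = n * (G * (F * H)) := by rw [sum_const, card_range, nsmul_eq_mul]; ring

theorem sq_sum_abs_le_card_rpow_mul_sum_abs_rpow {ι : Type*} (s : Finset ι) (f : ι → ℝ)
    {b : ℝ} (hb : 1 ≤ b) :
    (∑ i ∈ s, |f i|) ^ 2 ≤ (#s : ℝ) ^ ((2 * b - 2) / b) * (∑ i ∈ s, |f i| ^ b) ^ (2 / b) := by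
  have hb0 : b ≠ 0 := by positivity
  have hS : 0 ≤ ∑ i ∈ s, |f i| := sum_nonneg fun i _ => abs_nonneg _
  have hT : 0 ≤ ∑ i ∈ s, |f i| ^ b := sum_nonneg fun i _ => by positivity
  calc (∑ i ∈ s, |f i|) ^ 2 = ((∑ i ∈ s, |f i|) ^ b) ^ (2 / b) := by
        rw [← Real.rpow_mul hS, mul_div_cancel₀ _ hb0, Real.rpow_two]
    _ ≤ ((#s : ℝ) ^ (b - 1) * ∑ i ∈ s, |f i| ^ b) ^ (2 / b) := by
        gcongr
        exact Real.rpow_sum_le_const_mul_sum_rpow s f hb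
    _ = (#s : ℝ) ^ ((2 * b - 2) / b) * (∑ i ∈ s, |f i| ^ b) ^ (2 / b) := by
        rw [Real.mul_rpow (by positivity) hT, ← Real.rpow_mul (Nat.cast_nonneg _)]
        congr 2
        field_simp

theorem Int.card_Ioo_neg_natCast_le (n : ℕ) : #(Ioo (-(n : ℤ)) n) ≤ 2 * n := by
  rw [Int.card_Ioo]
  omega

theorem quadruple_sum_rank_two_bound_general (ρ : ℤ → ℝ) (n : ℕ)
    (b : ℝ) (hb1 : 1 ≤ b) :
    (∑ i ∈ Finset.range n, ∑ j ∈ Finset.range n, ∑ k ∈ Finset.range n,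
        ∑ l ∈ Finset.range n, ρ ((j:ℤ) - k) ^ 2 * |ρ ((i:ℤ) - j) * ρ ((k:ℤ) - l)|) ≤
      (n : ℝ) * ((2 * n : ℝ)) ^ ((2 * b - 2) / b) *
        (∑ k ∈ Finset.Ioo (-(n:ℤ)) (n:ℤ), ρ k ^ 2) *
        (∑ k ∈ Finset.Ioo (-(n:ℤ)) (n:ℤ), |ρ k| ^ b) ^ (2 / b) := by
  have hcard : (#(Ioo (-(n : ℤ)) n) : ℝ) ≤ 2 * n := by
    exact_mod_cast Int.card_Ioo_neg_natCast_le n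
  have hexp : 0 ≤ (2 * b - 2) / b := div_nonneg (by linarith) (by linarith)
  simp only [abs_mul]
  calc _ ≤ n * ((∑ m ∈ Ioo (-(n : ℤ)) n, ρ m ^ 2) * ((∑ m ∈ Ioo (-(n : ℤ)) n, |ρ m|) *
          ∑ m ∈ Ioo (-(n : ℤ)) n, |ρ m|)) :=
        sum_range_chain_le_mul_sum_Ioo (fun m => abs_nonneg (ρ m)) (fun m => sq_nonneg (ρ m))
          (fun m => abs_nonneg (ρ m)) n
    _ = n * (∑ m ∈ Ioo (-(n : ℤ)) n, ρ m ^ 2) * (∑ m ∈ Ioo (-(n : ℤ)) n, |ρ m|) ^ 2 := by ring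
    _ ≤ n * (∑ m ∈ Ioo (-(n : ℤ)) n, ρ m ^ 2) *
          ((2 * n : ℝ) ^ ((2 * b - 2) / b) * (∑ m ∈ Ioo (-(n : ℤ)) n, |ρ m| ^ b) ^ (2 / b)) := by
        gcongr
        refine (sq_sum_abs_le_card_rpow_mul_sum_abs_rpow _ ρ hb1).trans ?_
        gcongr
    _ = _ := by ring

/-- for `b ∈ [1,2]`,
`Σ_{i,j,k,ℓ=0}^{n−1} ρ(j−k)²|ρ(i−j)ρ(k−ℓ)| ≤ n·(2n)^{(2b−2)/b}·(Σ_{|k|<n}ρ(k)²)·(Σ_{|k|<n}|ρ(k)|^b)^{2/b}`. -/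
theorem quadruple_sum_rank_two_bound (ρ : ℤ → ℝ) (n : ℕ) (hn : 1 ≤ n)
    (b : ℝ) (hb1 : 1 ≤ b) (hb2 : b ≤ 2) :
    (∑ i ∈ Finset.range n, ∑ j ∈ Finset.range n, ∑ k ∈ Finset.range n,
        ∑ l ∈ Finset.range n, ρ ((j:ℤ) - k) ^ 2 * |ρ ((i:ℤ) - j) * ρ ((k:ℤ) - l)|) ≤
      (n : ℝ) * ((2 * n : ℝ)) ^ ((2 * b - 2) / b) *
        (∑ k ∈ Finset.Ioo (-(n:ℤ)) (n:ℤ), ρ k ^ 2) *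
        (∑ k ∈ Finset.Ioo (-(n:ℤ)) (n:ℤ), |ρ k| ^ b) ^ (2 / b) :=
  quadruple_sum_rank_two_bound_general ρ n b hb1
end

section
/- Let ρ : ℤ → ℝ and let n ≥ 1 be an integer. Set ρ_n(k) := |ρ(k)|·1_{|k|<n} and 1_n(k) := 1_{|k|<n}. Then Σ_{i,j,k,ℓ=0}^{n−1} ρ(j−k)²·|ρ(i−j)·ρ(k−ℓ)| ≤ n·‖ρ_n ∗ 1_n‖_{ℓ²(ℤ)}·(Σ_{|k|<n} ρ(k)²)^{3/2}. -/
/-!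
Summing out `i` and `l` first: `∑ᵢ |ρ(i - j)|` is one of the terms of `(ρ_n ∗ 1_n)(-j)`, and
`∑ₗ |ρ(k - l)| ≤ √(n S)` by Cauchy–Schwarz, where `S = ∑_{|m|<n} ρ(m)²`. What remains is
`√(n S) ∑ⱼ (ρ_n ∗ 1_n)(-j) ∑ₖ ρ(j - k)²`; the inner sum is at most `S`, and a second
Cauchy–Schwarz gives `∑_{j<n} (ρ_n ∗ 1_n)(-j) ≤ √n ‖ρ_n ∗ 1_n‖₂`.
-/

open scoped BigOperators

noncomputable section

/-- Convolution of two functions on `ℤ`. -/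
def zconv (f g : ℤ → ℝ) (k : ℤ) : ℝ := ∑' j : ℤ, f j * g (k - j)

/-- The `ℓ²(ℤ)` norm of a function on `ℤ`. -/
def l2normZ (f : ℤ → ℝ) : ℝ := Real.sqrt (∑' k : ℤ, f k ^ 2)

open Finset
open scoped Pointwise

lemma sum_range_sub_le_sum_Ioo {f : ℤ → ℝ} (hf : ∀ m, 0 ≤ f m) {n j : ℕ} (hj : j < n) :
    ∑ k ∈ range n, f (j - k) ≤ ∑ m ∈ Ioo (-(n : ℤ)) n, f m := by
  rw [← sum_image (g := fun k : ℕ => (j : ℤ) - k) fun a _ b _ h => by simpa using h]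
  refine sum_le_sum_of_subset_of_nonneg (fun m hm => ?_) fun m _ _ => hf m
  obtain ⟨k, hk, rfl⟩ := mem_image.mp hm
  rw [mem_range] at hk
  rw [mem_Ioo]
  omega

lemma sum_le_sqrt_card_mul_sqrt_sum_sq {ι : Type*} (s : Finset ι) (f : ι → ℝ) :
    ∑ i ∈ s, f i ≤ √(#s : ℝ) * √(∑ i ∈ s, f i ^ 2) := by
  rw [← Real.sqrt_mul (Nat.cast_nonneg _)]
  exact Real.le_sqrt_of_sq_le sq_sum_le_card_mul_sum_sq

lemma sum_comp_le_sqrt_card_mul_l2normZ {ι : Type*} {f : ℤ → ℝ}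
    (hf : Summable fun k => f k ^ 2) {e : ι → ℤ} (he : Function.Injective e) (s : Finset ι) :
    ∑ i ∈ s, f (e i) ≤ √(#s : ℝ) * l2normZ f := by
  refine (sum_le_sqrt_card_mul_sqrt_sum_sq s _).trans ?_
  unfold l2normZ
  gcongr
  rw [← sum_image (f := fun k => f k ^ 2) fun a _ b _ h => he h]
  exact hf.sum_le_tsum _ fun k _ => sq_nonneg (f k)

section zconv

variable {f g : ℤ → ℝ} {s t : Finset ℤ}

lemma zconv_nonneg (hf : ∀ j, 0 ≤ f j) (hg : ∀ j, 0 ≤ g j) (k : ℤ) : 0 ≤ zconv f g k :=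
  tsum_nonneg fun j => mul_nonneg (hf j) (hg _)

lemma summable_zconv_term (hf : ∀ j ∉ s, f j = 0) (k : ℤ) :
    Summable fun j => f j * g (k - j) :=
  summable_of_ne_finset_zero (s := s) fun j hj => by rw [hf j hj, zero_mul]

lemma zconv_eq_zero_of_notMem_add (hf : ∀ j ∉ s, f j = 0) (hg : ∀ j ∉ t, g j = 0) {k : ℤ}
    (hk : k ∉ s + t) : zconv f g k = 0 := by
  refine (tsum_congr fun j => ?_).trans tsum_zero
  by_cases hj : j ∈ s
  · have hkj : k - j ∉ t := fun h => hk (by simpa using add_mem_add hj h)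
    rw [hg _ hkj, mul_zero]
  · rw [hf j hj, zero_mul]

lemma summable_zconv_sq (hf : ∀ j ∉ s, f j = 0) (hg : ∀ j ∉ t, g j = 0) :
    Summable fun k => zconv f g k ^ 2 :=
  summable_of_ne_finset_zero (s := s + t) fun k hk => by
    rw [zconv_eq_zero_of_notMem_add hf hg hk]; simp

lemma sum_comp_mul_le_zconv {ι : Type*} (hf : ∀ j, 0 ≤ f j) (hg : ∀ j, 0 ≤ g j)
    (hs : ∀ j ∉ s, f j = 0) {e : ι → ℤ} (he : Function.Injective e) (u : Finset ι) (k : ℤ) :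
    ∑ i ∈ u, f (e i) * g (k - e i) ≤ zconv f g k := by
  rw [← sum_image (f := fun j => f j * g (k - j)) fun a _ b _ h => he h]
  exact (summable_zconv_term hs k).sum_le_tsum _ fun j _ => mul_nonneg (hf j) (hg _)

end zconv

lemma Real.rpow_three_div_two_eq_mul_sqrt {x : ℝ} (hx : 0 ≤ x) : x ^ ((3 : ℝ) / 2) = x * √x := by
  rw [show (3 : ℝ) / 2 = 1 + 1 / 2 by norm_num, Real.rpow_add' hx (by norm_num), Real.rpow_one,
    ← Real.sqrt_eq_rpow]

lemma ite_abs_lt_eq_zero_of_notMem_Ioo {n m : ℤ} {a : ℝ} (hm : m ∉ Ioo (-n) n) :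
    (if |m| < n then a else 0) = 0 :=
  if_neg (by rwa [abs_lt, ← mem_Ioo])

section truncation

variable (ρ : ℤ → ℝ) {n : ℕ}

lemma sum_abs_sub_le_zconv {j : ℕ} (hj : j < n) :
    ∑ i ∈ range n, |ρ (i - j)| ≤
      zconv (fun k => if |k| < (n : ℤ) then |ρ k| else 0)
        (fun k => if |k| < (n : ℤ) then (1 : ℝ) else 0) (-j) := by
  set ρn : ℤ → ℝ := fun k => if |k| < (n : ℤ) then |ρ k| else 0
  set en : ℤ → ℝ := fun k => if |k| < (n : ℤ) then 1 else 0
  have hterm : ∀ i ∈ range n, |ρ (i - j)| = ρn (i - j) * en (-j - (i - j)) := by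
    intro i hi
    rw [mem_range] at hi
    simp only [ρn, en]
    rw [if_pos (by rw [abs_lt]; omega), if_pos (by rw [abs_lt]; omega), mul_one]
  rw [sum_congr rfl hterm]
  refine sum_comp_mul_le_zconv (f := ρn) (g := en) (s := Ioo (-(n : ℤ)) n)
    (e := fun i : ℕ => (i : ℤ) - j) (fun m => by positivity) (fun m => by positivity)
    (fun m => ite_abs_lt_eq_zero_of_notMem_Ioo) (fun a b h => by simpa using h) _ _

lemma sum_abs_sub_le_sqrt_mul_sqrt {k : ℕ} (hk : k < n) :
    ∑ l ∈ range n, |ρ (k - l)| ≤ √(n : ℝ) * √(∑ m ∈ Ioo (-(n : ℤ)) n, ρ m ^ 2) := by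
  refine (sum_le_sqrt_card_mul_sqrt_sum_sq _ _).trans ?_
  simp only [card_range, sq_abs]
  gcongr
  exact sum_range_sub_le_sum_Ioo (fun m => sq_nonneg (ρ m)) hk

lemma sum_zconv_neg_le_sqrt_mul_l2normZ (n : ℕ) :
    ∑ j ∈ range n, zconv (fun k => if |k| < (n : ℤ) then |ρ k| else 0)
        (fun k => if |k| < (n : ℤ) then (1 : ℝ) else 0) (-j) ≤
      √(n : ℝ) * l2normZ (zconv (fun k => if |k| < (n : ℤ) then |ρ k| else 0)
        (fun k => if |k| < (n : ℤ) then (1 : ℝ) else 0)) := by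
  simpa using sum_comp_le_sqrt_card_mul_l2normZ
    (summable_zconv_sq (s := Ioo (-(n : ℤ)) n) (t := Ioo (-(n : ℤ)) n)
      (fun m => ite_abs_lt_eq_zero_of_notMem_Ioo) (fun m => ite_abs_lt_eq_zero_of_notMem_Ioo))
    (e := fun j : ℕ => -(j : ℤ)) (fun a b h => by simpa using h) (range n)

end truncation

theorem quadruple_sum_le_conv_l2_general (ρ : ℤ → ℝ) (n : ℕ) :
    (∑ i ∈ Finset.range n, ∑ j ∈ Finset.range n, ∑ k ∈ Finset.range n,
        ∑ l ∈ Finset.range n, ρ ((j:ℤ) - k) ^ 2 * |ρ ((i:ℤ) - j) * ρ ((k:ℤ) - l)|) ≤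
      (n : ℝ) *
        l2normZ (zconv (fun k => if |k| < (n:ℤ) then |ρ k| else 0)
          (fun k => if |k| < (n:ℤ) then (1:ℝ) else 0)) *
        (∑ k ∈ Finset.Ioo (-(n:ℤ)) (n:ℤ), ρ k ^ 2) ^ ((3:ℝ)/2) := by
  set C := zconv (fun k => if |k| < (n:ℤ) then |ρ k| else 0)
    (fun k => if |k| < (n:ℤ) then (1:ℝ) else 0)
  set S := ∑ k ∈ Ioo (-(n:ℤ)) n, ρ k ^ 2
  have hC_nonneg : ∀ c, 0 ≤ C c := zconv_nonneg (fun k => by positivity) (fun k => by positivity)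
  calc _ = ∑ j ∈ range n, ∑ k ∈ range n, ρ (j - k) ^ 2 *
          ((∑ i ∈ range n, |ρ (i - j)|) * ∑ l ∈ range n, |ρ (k - l)|) := by
        simp_rw [sum_mul_sum, abs_mul, mul_sum]
        exact sum_comm.trans (sum_congr rfl fun j _ => sum_comm)
    _ ≤ ∑ j ∈ range n, ∑ k ∈ range n, ρ (j - k) ^ 2 * (C (-j) * (√(n : ℝ) * √S)) := by
        gcongr with j hj k hk
        · exact hC_nonneg _
        · exact sum_abs_sub_le_zconv ρ (mem_range.mp hj)
        · exact sum_abs_sub_le_sqrt_mul_sqrt ρ (mem_range.mp hk)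
    _ = √(n : ℝ) * √S * ∑ j ∈ range n, C (-j) * ∑ k ∈ range n, ρ (j - k) ^ 2 := by
        simp only [mul_sum]
        exact sum_congr rfl fun j _ => sum_congr rfl fun k _ => by ring
    _ ≤ √(n : ℝ) * √S * ∑ j ∈ range n, C (-j) * S := by
        gcongr with j hj
        · exact hC_nonneg _
        · exact sum_range_sub_le_sum_Ioo (fun m => sq_nonneg (ρ m)) (mem_range.mp hj)
    _ ≤ √(n : ℝ) * √S * (√(n : ℝ) * l2normZ C * S) := by
        rw [← sum_mul]
        gcongr
        exact sum_zconv_neg_le_sqrt_mul_l2normZ ρ n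
    _ = n * l2normZ C * S ^ ((3 : ℝ) / 2) := by
        rw [Real.rpow_three_div_two_eq_mul_sqrt (sum_nonneg fun k _ => sq_nonneg (ρ k))]
        linear_combination (l2normZ C * S * √S) * Real.mul_self_sqrt (Nat.cast_nonneg (α := ℝ) n)

/-- with `ρ_n(k) = |ρ(k)|·1_{|k|<n}` and `1_n(k) = 1_{|k|<n}`,
`Σ_{i,j,k,ℓ=0}^{n−1} ρ(j−k)²|ρ(i−j)ρ(k−ℓ)| ≤ n·‖ρ_n ∗ 1_n‖_{ℓ²}·(Σ_{|k|<n}ρ(k)²)^{3/2}`. -/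
theorem quadruple_sum_le_conv_l2 (ρ : ℤ → ℝ) (n : ℕ) (hn : 1 ≤ n) :
    (∑ i ∈ Finset.range n, ∑ j ∈ Finset.range n, ∑ k ∈ Finset.range n,
        ∑ l ∈ Finset.range n, ρ ((j:ℤ) - k) ^ 2 * |ρ ((i:ℤ) - j) * ρ ((k:ℤ) - l)|) ≤
      (n : ℝ) *
        l2normZ (zconv (fun k => if |k| < (n:ℤ) then |ρ k| else 0)
          (fun k => if |k| < (n:ℤ) then (1:ℝ) else 0)) *
        (∑ k ∈ Finset.Ioo (-(n:ℤ)) (n:ℤ), ρ k ^ 2) ^ ((3:ℝ)/2) :=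
  quadruple_sum_le_conv_l2_general ρ n
end
end
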